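/- arXiv:1301.4747 — 2 statements merged into one kernel-verified Lean document; each statement's English description precedes it below -/
import Mathlib

section
/- Let f ∈ 𝒯_v with partial sums f_n. Then for every n ≥ 0 and every integer j with 0 ≤ j ≤ 2^{2n}, the number 4^n · f_{2n}(j/2^{2n}) is an even integer, i.e. there exists k ∈ ℤ with 4^n · f_{2n}(j/2^{2n}) = 2k. -/
/-- `nint x` is the distance from `x` to the nearest integer. -/
noncomputable def nint (x : ℝ) : ℝ := |x - round x|

/-- The `n`-th partial sum `f_n(x) = ∑_{k=0}^{n−1} 2^{−k} ω_k(x) φ(2^k x)` of a function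
`f ∈ 𝒯_v` with signs `ω n j ∈ {−1,1}`, where `ω_n(x) = ω n ⌊2^n x⌋`. -/
noncomputable def TakagiVPartial (ω : ℕ → ℕ → ℝ) (n : ℕ) (x : ℝ) : ℝ :=
  ∑ k ∈ Finset.range n, (1 / 2 : ℝ) ^ k * ω k ⌊(2 : ℝ) ^ k * x⌋₊ * nint ((2 : ℝ) ^ k * x)

/-- For `f ∈ 𝒯_v` with partial sums `f_n`, the number `4^n · f_{2n}(j/2^{2n})` is an even
integer for every `n ≥ 0` and every `0 ≤ j ≤ 2^{2n}`. -/
theorem partial_sum_dyadic_even (ω : ℕ → ℕ → ℝ) (hω : ∀ n j, ω n j = 1 ∨ ω n j = -1)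
    (n : ℕ) (j : ℕ) (hj : j ≤ 2 ^ (2 * n)) :
    ∃ k : ℤ, (4 : ℝ) ^ n * TakagiVPartial ω (2 * n) ((j : ℝ) / 2 ^ (2 * n)) = 2 * k := by
  set x : ℝ := (j : ℝ) / 2 ^ (2 * n) with hx
  set e : ℕ → ℤ := fun k =>
    (if ω k ⌊(2 : ℝ) ^ k * x⌋₊ = 1 then 1 else -1) *
      |(j : ℤ) - 2 ^ (2 * n - k) * round ((2 : ℝ) ^ k * x)| with he
  have key : (4 : ℝ) ^ n * TakagiVPartial ω (2 * n) x
      = ((∑ k ∈ Finset.range (2 * n), e k : ℤ) : ℝ) := by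
    rw [TakagiVPartial, Finset.mul_sum]
    rw [Int.cast_sum]
    apply Finset.sum_congr rfl
    intro k hk
    have hk' : k < 2 * n := Finset.mem_range.mp hk
    set q : ℤ := round ((2 : ℝ) ^ k * x) with hq
    have h2 : (2 : ℝ) ^ (2 * n - k) * ((2 : ℝ) ^ k * x) = (j : ℝ) := by
      rw [hx, ← mul_assoc, ← pow_add, Nat.sub_add_cancel hk'.le]
      field_simp
    have hcoef : (4 : ℝ) ^ n * (1 / 2 : ℝ) ^ k = (2 : ℝ) ^ (2 * n - k) := by
      have : (4 : ℝ) ^ n = (2 : ℝ) ^ (2 * n) := by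
        rw [pow_mul]; norm_num
      rw [this, one_div, inv_pow, ← pow_sub₀ (2 : ℝ) (by norm_num) hk'.le]
    have habs : (4 : ℝ) ^ n * ((1 / 2 : ℝ) ^ k * nint ((2 : ℝ) ^ k * x))
        = |(j : ℝ) - 2 ^ (2 * n - k) * q| := by
      rw [nint, ← mul_assoc, hcoef,
        show (j : ℝ) - 2 ^ (2 * n - k) * q = 2 ^ (2 * n - k) * ((2 : ℝ) ^ k * x - q) by
          rw [mul_sub, h2],
        abs_mul, abs_of_nonneg (a := (2 : ℝ) ^ (2 * n - k)) (by positivity)]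
    rcases hω k ⌊(2 : ℝ) ^ k * x⌋₊ with hε | hε
    · rw [he]
      simp only [hε, if_pos rfl]
      push_cast
      rw [one_mul, show (4:ℝ)^n * ((1/2:ℝ)^k * 1 * nint ((2:ℝ)^k * x))
          = (4:ℝ)^n * ((1/2:ℝ)^k * nint ((2:ℝ)^k * x)) by ring, habs]
    · rw [he]
      have hne : ω k ⌊(2 : ℝ) ^ k * x⌋₊ ≠ 1 := by rw [hε]; norm_num
      simp only [if_neg hne]
      push_cast
      rw [hε, show (4:ℝ)^n * ((1/2:ℝ)^k * (-1) * nint ((2:ℝ)^k * x))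
          = -((4:ℝ)^n * ((1/2:ℝ)^k * nint ((2:ℝ)^k * x))) by ring, habs]
      ring
  set S : ℤ := ∑ k ∈ Finset.range (2 * n), e k with hS
  have hpar : (S : ZMod 2) = 0 := by
    rw [hS, Int.cast_sum]
    have : ∀ k ∈ Finset.range (2 * n), ((e k : ZMod 2)) = (j : ZMod 2) := by
      intro k hk
      have hk' : k < 2 * n := Finset.mem_range.mp hk
      rw [he]
      push_cast
      have h2z : (2 : ZMod 2) ^ (2 * n - k) = 0 := by
        have hm : 2 * n - k ≠ 0 := Nat.sub_ne_zero_of_lt hk'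
        rw [show ((2 : ZMod 2)) = 0 by decide, zero_pow hm]
      have habs : ((|(j : ℤ) - 2 ^ (2 * n - k) * round ((2 : ℝ) ^ k * x)| : ℤ) : ZMod 2)
          = (j : ZMod 2) := by
        rcases abs_choice ((j : ℤ) - 2 ^ (2 * n - k) * round ((2 : ℝ) ^ k * x)) with h | h
        · rw [h]; push_cast; rw [h2z, zero_mul, sub_zero]
        · rw [h]; push_cast; rw [h2z, zero_mul, sub_zero, CharTwo.neg_eq]
      split_ifs with h
      · simpa using habs
      · rw [neg_mul, one_mul, CharTwo.neg_eq]; exact habs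
    rw [Finset.sum_congr rfl this, Finset.sum_const, Finset.card_range]
    rw [nsmul_eq_mul]
    have : ((2 * n : ℕ) : ZMod 2) = 0 := by
      push_cast
      rw [show ((2 : ZMod 2)) = 0 by decide]; ring
    rw [this, zero_mul]
  have hdvd : (2 : ℤ) ∣ S := by
    have := (ZMod.intCast_zmod_eq_zero_iff_dvd S 2).mp hpar
    exact_mod_cast this
  obtain ⟨k, hk⟩ := hdvd
  refine ⟨k, ?_⟩
  rw [key, hk]
  push_cast
  ring
end

section
/- Given signs ω_{n,j} ∈ {−1,1} for n ≥ 0 and 0 ≤ j < 2^n, define integers s_{n,j} for n ≥ 0, 0 ≤ j < 2^n by the recursion s_{0,0} = 0, s_{n+1,2j} = s_{n,j} + ω_{n,j}, and s_{n+1,2j+1} = s_{n,j} − ω_{n,j}. Then for every integer m ∈ ℤ there is exactly one index j with 0 ≤ j < 2^{|m|} such that s_{|m|, j} = m. -/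
/-- Given signs `ω n j ∈ {−1,1}` and the slopes `s n j` defined by the recursion
`s 0 0 = 0`, `s (n+1) (2j) = s n j + ω n j`, `s (n+1) (2j+1) = s n j − ω n j`, for every
integer `m` there is exactly one index `j < 2^{|m|}` with `s |m| j = m`. -/
theorem existsUnique_slope_eq (ω : ℕ → ℕ → ℤ) (hω : ∀ n j, j < 2 ^ n → ω n j = 1 ∨ ω n j = -1)
    (s : ℕ → ℕ → ℤ) (hs0 : s 0 0 = 0)
    (hsEven : ∀ n j, j < 2 ^ n → s (n + 1) (2 * j) = s n j + ω n j)
    (hsOdd : ∀ n j, j < 2 ^ n → s (n + 1) (2 * j + 1) = s n j - ω n j)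
    (m : ℤ) :
    ∃! j : ℕ, j < 2 ^ m.natAbs ∧ s m.natAbs j = m := by
  -- First: the bound |s n j| ≤ n.
  have habs : ∀ n j, j < 2 ^ n → (s n j).natAbs ≤ n := by
    intro n
    induction n with
    | zero =>
      intro j hj
      interval_cases j
      simp [hs0]
    | succ n ih =>
      intro j hj
      obtain ⟨q, hq⟩ : ∃ q, j = 2 * q ∨ j = 2 * q + 1 := ⟨j / 2, by omega⟩
      have hqlt : q < 2 ^ n := by rw [pow_succ] at hj; omega
      have h1 := hsEven n q hqlt
      have h2 := hsOdd n q hqlt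
      have h3 := hω n q hqlt
      have h4 := ih q hqlt
      rcases hq with h | h <;> subst h <;> omega
  have key : ∀ n (m : ℤ), m.natAbs = n → ∃! j, j < 2 ^ n ∧ s n j = m := by
    intro n
    induction n with
    | zero =>
      intro m hm
      refine ⟨0, ⟨by norm_num, by rw [hs0]; omega⟩, ?_⟩
      intro y hy
      have : y < 2 ^ 0 := hy.1
      simpa using this
    | succ n ih =>
      intro m hm
      set ε : ℤ := if 0 < m then 1 else -1 with hε
      have hεsign : (0 < m ∧ ε = 1) ∨ (m < 0 ∧ ε = -1) := by
        by_cases h : 0 < m <;> simp [hε, h] <;> omega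
      have hεpm : ε = 1 ∨ ε = -1 := by rcases hεsign with ⟨_, h⟩ | ⟨_, h⟩ <;> omega
      have hm' : (m - ε).natAbs = n := by rcases hεsign with ⟨h1, h2⟩ | ⟨h1, h2⟩ <;> omega
      obtain ⟨j', ⟨hj'lt, hj's⟩, huniq⟩ := ih (m - ε) hm'
      have hωpm := hω n j' hj'lt
      have heven := hsEven n j' hj'lt
      have hodd := hsOdd n j' hj'lt
      -- Any witness y must be a child of j'.
      have hstep : ∀ y, y < 2 ^ (n + 1) → s (n + 1) y = m → y = 2 * j' ∨ y = 2 * j' + 1 := by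
        intro y hylt hys
        obtain ⟨q, hq⟩ : ∃ q, y = 2 * q ∨ y = 2 * q + 1 := ⟨y / 2, by omega⟩
        have hqlt : q < 2 ^ n := by rw [pow_succ] at hylt; omega
        have h1 := hsEven n q hqlt
        have h2 := hsOdd n q hqlt
        have h3 := hω n q hqlt
        have h4 := habs n q hqlt
        have hsq : s n q = m - ε := by
          rcases hεsign with ⟨ha, hb⟩ | ⟨ha, hb⟩ <;> rcases hq with h | h <;> subst h <;> omega
        have := huniq q ⟨hqlt, hsq⟩
        omega
      by_cases hc : ω n j' = ε
      · refine ⟨2 * j', ⟨by rw [pow_succ]; omega, by rw [heven, hj's, hc]; ring⟩, ?_⟩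
        intro y ⟨hylt, hys⟩
        rcases hstep y hylt hys with h | h
        · exact h
        · subst h; omega
      · have hc' : ω n j' = -ε := by
          rcases hωpm with h | h <;> rcases hεpm with h' | h' <;> omega
        refine ⟨2 * j' + 1, ⟨by rw [pow_succ]; omega, by rw [hodd, hj's, hc']; ring⟩, ?_⟩
        intro y ⟨hylt, hys⟩
        rcases hstep y hylt hys with h | h
        · subst h; omega
        · exact h
  exact key m.natAbs m rfl
end
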